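/- (Theorem 1) Given a labeled MDP M, its augmented MDP M', an LTLf formula φ over AP, and the corresponding LTL formula g(φ), it holds that max_{π ∈ Π} Pr(M^π ⊨ φ) = max_{π' ∈ Π'} Pr(M'^{π'} ⊨ g(φ)), where Π is the set of all policies of M, Π' is the set of all policies of M', Pr(M^π ⊨ φ) is the probability (under the measure induced by π) of the paths of M that satisfy φ under finite-trace semantics, and Pr(M'^{π'} ⊨ g(φ)) is the probability of the infinite paths of M' whose labeling satisfies g(φ) under LTL semantics. -/

import Mathlib

open scoped ENNReal

namespace LTLfMDP

/-- A labeled Markov decision process (data part): transition probabilities,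
enabled actions, initial state and labeling function. -/
structure MDP (S A AP : Type) where
  P : S → A → S → ℝ≥0∞
  enabled : S → Set A
  init : S
  label : S → Set AP

/-- A finite path from the initial state: the list of action/successor-state
steps taken (the implicit first state is `init`). -/
abbrev FinPath (S A : Type) := List (A × S)

/-- An infinite path from the initial state: at time `i` the action taken and
the successor state reached (the implicit first state is `init`). -/
abbrev InfPath (S A : Type) := ℕ → A × S

/-- A policy maps every finite path to an action. -/
abbrev Policy (S A : Type) := FinPath S A → A

variable {S A AP : Type}

/-- Well-formedness of a labeled MDP: every state has an enabled action and
the transition probabilities of enabled actions sum to one. -/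
def MDP.IsWF [Fintype S] (M : MDP S A AP) : Prop :=
  (∀ s : S, (M.enabled s).Nonempty) ∧
    ∀ (s : S) (a : A), a ∈ M.enabled s → (∑ s' : S, M.P s a s') = 1

/-- The last state of a finite path (`init` for the empty path). -/
def MDP.lastState (M : MDP S A AP) (l : FinPath S A) : S :=
  (l.map Prod.snd).getLastD M.init

/-- The `i`-th state `s_i` along a finite path (`s_0 = init`). -/
def MDP.stateAtF (M : MDP S A AP) (l : FinPath S A) (i : ℕ) : S :=
  M.lastState (l.take i)

/-- A finite path of the MDP: every action is enabled and every transition has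
positive probability. -/
def MDP.ValidFin (M : MDP S A AP) (l : FinPath S A) : Prop :=
  ∀ i (h : i < l.length),
    (l.get ⟨i, h⟩).1 ∈ M.enabled (M.stateAtF l i) ∧
      0 < M.P (M.stateAtF l i) (l.get ⟨i, h⟩).1 (l.get ⟨i, h⟩).2

/-- The `i`-th state `s_i` along an infinite path (`s_0 = init`). -/
def MDP.stateAtI (M : MDP S A AP) (w : InfPath S A) : ℕ → S
  | 0 => M.init
  | i + 1 => (w i).2

/-- An infinite path of the MDP: every action is enabled and every transition
has positive probability. -/
def MDP.ValidInf (M : MDP S A AP) (w : InfPath S A) : Prop :=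
  ∀ i : ℕ,
    (w i).1 ∈ M.enabled (M.stateAtI w i) ∧
      0 < M.P (M.stateAtI w i) (w i).1 (M.stateAtI w (i + 1))

/-- A policy of the MDP chooses an enabled action after every finite path. -/
def MDP.IsPolicy (M : MDP S A AP) (π : Policy S A) : Prop :=
  ∀ l : FinPath S A, π l ∈ M.enabled (M.lastState l)

/-- The finite prefix of length `n` of an infinite path. -/
def takeI (w : InfPath S A) (n : ℕ) : FinPath S A :=
  (List.range n).map w

/-- A finite path is `π`-consistent if each of its actions is the one `π`
assigns to the corresponding proper prefix. -/
def ConsistentFin (π : Policy S A) (l : FinPath S A) : Prop :=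
  ∀ i (h : i < l.length), (l.get ⟨i, h⟩).1 = π (l.take i)

/-- `Paths^π(s_init)`: the set of `π`-consistent infinite paths of the MDP. -/
def MDP.PathsSet (M : MDP S A AP) (π : Policy S A) : Set (InfPath S A) :=
  { w | M.ValidInf w ∧ ∀ i : ℕ, (w i).1 = π (takeI w i) }

/-- The cylinder set of a finite path: all `π`-consistent infinite paths of the
MDP extending it. -/
def MDP.Cyl (M : MDP S A AP) (π : Policy S A) (l : FinPath S A) :
    Set (InfPath S A) :=
  { w | w ∈ M.PathsSet π ∧ takeI w l.length = l }

/-- The σ-algebra generated by the cylinder sets of (valid, `π`-consistent)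
finite paths. -/
def MDP.cylSigma (M : MDP S A AP) (π : Policy S A) :
    MeasurableSpace (InfPath S A) :=
  MeasurableSpace.generateFrom
    { C | ∃ l : FinPath S A, M.ValidFin l ∧ ConsistentFin π l ∧ C = M.Cyl π l }

/-- The product of the transition probabilities along a finite path starting
in a given state. -/
noncomputable def MDP.weightFrom (M : MDP S A AP) : S → List (A × S) → ℝ≥0∞
  | _, [] => 1
  | s, (a, s') :: rest => M.P s a s' * M.weightFrom s' rest

/-- `∏_{0 ≤ i < n} P(s_i, a_i, s_{i+1})` for a finite path from `init`. -/
noncomputable def MDP.pathWeight (M : MDP S A AP) (l : FinPath S A) : ℝ≥0∞ :=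
  M.weightFrom M.init l

/-- `μ` is the probability measure `Pr^π` induced by the policy `π`: it assigns
to the cylinder set of every valid `π`-consistent finite path the product of
the transition probabilities along that path. -/
def IsCylMeasure (M : MDP S A AP) (π : Policy S A)
    (μ : @MeasureTheory.Measure (InfPath S A) (M.cylSigma π)) : Prop :=
  ∀ l : FinPath S A, M.ValidFin l → ConsistentFin π l →
    μ (M.Cyl π l) = M.pathWeight l

/-- `{w ∈ Paths^π(s_init) : pre(w) ∩ Paths_fin,φ ≠ ∅}`: the `π`-consistent
infinite paths having some finite prefix in the given set of finite paths. -/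
def MDP.SatFinSet (M : MDP S A AP) (π : Policy S A)
    (Pfin : Set (FinPath S A)) : Set (InfPath S A) :=
  { w | w ∈ M.PathsSet π ∧ ∃ l ∈ Pfin, takeI w l.length = l }

/-- The augmented MDP `M'`: state `none` is `s_term`, action `none` is
`a_term`, and atomic proposition `none` is `alive`. -/
noncomputable def MDP.augment (M : MDP S A AP) : MDP (Option S) (Option A) (Option AP) where
  P s a s' :=
    match s, a, s' with
    | some s0, some a0, some s1 => M.P s0 a0 s1
    | _, none, none => 1
    | _, _, _ => 0
  enabled s :=
    match s with
    | some s0 => insert none (Option.some '' M.enabled s0)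
    | none => {none}
  init := some M.init
  label s :=
    match s with
    | some s0 => insert none (Option.some '' M.label s0)
    | none => ∅

/-- A finite path of `M` viewed as a finite path of the augmented MDP `M'`. -/
def liftFin (l : FinPath S A) : FinPath (Option S) (Option A) :=
  l.map fun p => (some p.1, some p.2)

/-- Membership in `Π'`: under `π'` every `π'`-consistent path of the augmented
MDP eventually takes the action `a_term` (= `none`). -/
def MDP.Terminating (M' : MDP (Option S) (Option A) (Option AP))
    (π' : Policy (Option S) (Option A)) : Prop :=
  ∀ w ∈ M'.PathsSet π', ∃ i : ℕ, (w i).1 = (none : Option A)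

/-- Syntax of LTL / LTLf formulas over atomic propositions `α`. -/
inductive LTL (α : Type) : Type
  | tru : LTL α
  | atom : α → LTL α
  | neg : LTL α → LTL α
  | conj : LTL α → LTL α → LTL α
  | next : LTL α → LTL α
  | untl : LTL α → LTL α → LTL α

variable {α : Type}

/-- Infinite-trace (LTL) satisfaction `σ, i ⊨ φ`. -/
def LTL.SatI (σ : ℕ → Set α) : ℕ → LTL α → Prop
  | _, .tru => True
  | i, .atom p => p ∈ σ i
  | i, .neg φ => ¬ LTL.SatI σ i φ
  | i, .conj φ ψ => LTL.SatI σ i φ ∧ LTL.SatI σ i ψ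
  | i, .next φ => LTL.SatI σ (i + 1) φ
  | i, .untl φ ψ =>
      ∃ j : ℕ, i ≤ j ∧ LTL.SatI σ j ψ ∧ ∀ k : ℕ, i ≤ k → k < j → LTL.SatI σ k φ

/-- Infinite-trace (LTL) satisfaction `σ ⊨ φ`. -/
def LTL.Sat (σ : ℕ → Set α) (φ : LTL α) : Prop := LTL.SatI σ 0 φ

/-- `G φ` abbreviates `¬(⊤ U ¬φ)`. -/
def LTL.G (φ : LTL α) : LTL α := .neg (.untl .tru (.neg φ))

/-- Finite-trace (LTLf) satisfaction `ρ, i ⊨ φ` (positions outside the trace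
carry the empty letter, which is never consulted from a position inside a
nonempty trace). -/
def LTL.SatFI (ρ : List (Set α)) : ℕ → LTL α → Prop
  | _, .tru => True
  | i, .atom p => p ∈ ρ.getD i ∅
  | i, .neg φ => ¬ LTL.SatFI ρ i φ
  | i, .conj φ ψ => LTL.SatFI ρ i φ ∧ LTL.SatFI ρ i ψ
  | i, .next φ => i + 1 < ρ.length ∧ LTL.SatFI ρ (i + 1) φ
  | i, .untl φ ψ =>
      ∃ j : ℕ, i ≤ j ∧ j < ρ.length ∧ LTL.SatFI ρ j ψ ∧
        ∀ k : ℕ, i ≤ k → k < j → LTL.SatFI ρ k φ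

/-- Finite-trace (LTLf) satisfaction `ρ ⊨ φ`. -/
def LTL.SatF (ρ : List (Set α)) (φ : LTL α) : Prop := LTL.SatFI ρ 0 φ

/-- The translation `t` from LTLf formulas over `α` to LTL formulas over
`Option α`, where the fresh proposition `alive` is `none`. -/
def LTL.trans : LTL α → LTL (Option α)
  | .tru => .tru
  | .atom p => .conj (.atom (some p)) (.atom none)
  | .neg φ => .neg φ.trans
  | .conj φ ψ => .conj φ.trans ψ.trans
  | .next φ => .next (.conj (.atom none) φ.trans)
  | .untl φ ψ => .untl φ.trans (.conj (.atom none) ψ.trans)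

/-- `g(φ) = t(φ) ∧ (alive U (G ¬alive))`. -/
def LTL.gtrans (φ : LTL α) : LTL (Option α) :=
  .conj φ.trans (.untl (.atom none) (LTL.G (.neg (.atom none))))

/-- The lift of a finite trace over `2^AP` to an infinite trace over
`2^(AP ∪ {alive})`: the `i`-th letter is `ρ_i ∪ {alive}` for `i < |ρ|`
and `∅` afterwards. -/
def liftTrace (ρ : List (Set α)) : ℕ → Set (Option α) := fun i =>
  if i < ρ.length then insert none (Option.some '' ρ.getD i ∅) else ∅

/-- `{w ∈ Paths^π(s_init) : w ⊨ φ}` for an LTLf formula `φ`: some finite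
prefix of `w` has labeling `L(s_0)…L(s_k)` in `L(φ)`. -/
def MDP.SatPhiSet (M : MDP S A AP) (π : Policy S A) (φ : LTL AP) :
    Set (InfPath S A) :=
  { w | w ∈ M.PathsSet π ∧ ∃ k : ℕ,
      LTL.SatF ((List.range (k + 1)).map fun i => M.label (M.stateAtI w i)) φ }

/-- `{w ∈ Paths^π(s_init) : L(w) ⊨ ψ}` for an LTL formula `ψ`: the labeling of
the infinite path `w` satisfies `ψ` under infinite-trace semantics. -/
def MDP.SatLTLSet {S A AP' : Type} (M : MDP S A AP') (π : Policy S A)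
    (ψ : LTL AP') : Set (InfPath S A) :=
  { w | w ∈ M.PathsSet π ∧ LTL.Sat (fun i => M.label (M.stateAtI w i)) ψ }


/-! Both probabilities are sums of path weights over prefix-free families of finite paths, since
the cylinders of such a family are disjoint. A path of `M` satisfies `φ` iff it passes through a
minimal finite path satisfying `φ`. A path of `M'` satisfies `g(φ)` iff it is a finite path `p`
of `M` satisfying `φ` followed by termination: `alive U G ¬alive` forces termination, and the
lifted labelling of `p` satisfies `t(φ)` exactly when the labelling of `p` satisfies `φ`.
Given `π`, the policy of `M'` that follows `π` and terminates at the first satisfying prefix keeps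
every minimal satisfying path of `π`, with the same weight; given `π'`, the policy of `M` that
follows `π'` until it terminates keeps every path on which `π'` terminates after satisfying `φ`.
So each supremum bounds the other. -/

section Stepwise

variable {β : Type}

/-- `MDP.ValidFin` and `ConsistentFin` are both of this form. -/
def Stepwise (Q : List β → β → Prop) (l : List β) : Prop :=
  ∀ i (h : i < l.length), Q (l.take i) l[i]

variable {Q R : List β → β → Prop}

lemma Stepwise.of_prefix {l₁ l₂ : List β} (h : l₁ <+: l₂) (hl₂ : Stepwise Q l₂) :
    Stepwise Q l₁ := by
  obtain ⟨t, rfl⟩ := h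
  intro i hi
  have := hl₂ i (by rw [List.length_append]; omega)
  rwa [List.getElem_append_left hi, List.take_append_of_le_length hi.le] at this

lemma stepwise_append_singleton {l : List β} {x : β} :
    Stepwise Q (l ++ [x]) ↔ Stepwise Q l ∧ Q l x := by
  refine ⟨fun h => ⟨h.of_prefix (List.prefix_append _ _), ?_⟩, fun ⟨hl, hx⟩ i hi => ?_⟩
  · simpa using h l.length (by simp)
  · rcases Nat.lt_or_ge i l.length with hlt | hge
    · rw [List.getElem_append_left hlt, List.take_append_of_le_length hlt.le]
      exact hl i hlt
    · obtain rfl : i = l.length := by rw [List.length_append, List.length_singleton] at hi; omega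
      simpa using hx

lemma stepwise_map {γ : Type} {Q : List γ → γ → Prop} (f : β → γ) {l : List β} :
    Stepwise Q (l.map f) ↔ Stepwise (fun h x => Q (h.map f) (f x)) l := by
  simp [Stepwise, List.map_take]

lemma Stepwise.imp {l : List β} (hl : Stepwise Q l)
    (hQR : ∀ h x, h ++ [x] <+: l → Q h x → R h x) : Stepwise R l := fun i hi =>
  hQR _ _ (List.take_concat_get' l i hi ▸ List.take_prefix _ _) (hl i hi)

end Stepwise

lemma validFin_iff_stepwise (M : MDP S A AP) (l : FinPath S A) :
    M.ValidFin l ↔ Stepwise (fun h x => x.1 ∈ M.enabled (M.lastState h) ∧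
      0 < M.P (M.lastState h) x.1 x.2) l := Iff.rfl

lemma consistentFin_iff_stepwise (π : Policy S A) (l : FinPath S A) :
    ConsistentFin π l ↔ Stepwise (fun h x => x.1 = π h) l := Iff.rfl

@[simp] lemma lastState_append_singleton (M : MDP S A AP) (l : FinPath S A) (x : A × S) :
    M.lastState (l ++ [x]) = x.2 := by
  simp [MDP.lastState]

@[simp] lemma length_takeI (w : InfPath S A) (n : ℕ) : (takeI w n).length = n := by
  simp [takeI]

lemma takeI_succ (w : InfPath S A) (n : ℕ) : takeI w (n + 1) = takeI w n ++ [w n] := by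
  simp [takeI, List.range_succ]

lemma take_takeI (w : InfPath S A) {m n : ℕ} (h : m ≤ n) : (takeI w n).take m = takeI w m := by
  simp [takeI, ← List.map_take, List.take_range, Nat.min_eq_left h]

lemma takeI_prefix_takeI (w : InfPath S A) {m n : ℕ} (h : m ≤ n) : takeI w m <+: takeI w n :=
  take_takeI w h ▸ List.take_prefix _ _

lemma lastState_takeI (M : MDP S A AP) (w : InfPath S A) (n : ℕ) :
    M.lastState (takeI w n) = M.stateAtI w n := by
  cases n with
  | zero => rfl
  | succ n => simp [takeI_succ, MDP.stateAtI, MDP.lastState]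

lemma validFin_takeI (M : MDP S A AP) {w : InfPath S A} (hw : M.ValidInf w) (n : ℕ) :
    M.ValidFin (takeI w n) := by
  induction n with
  | zero => intro i hi; simp at hi
  | succ n ih =>
    rw [validFin_iff_stepwise, takeI_succ, stepwise_append_singleton, lastState_takeI]
    exact ⟨ih, hw n⟩

lemma consistentFin_takeI {π : Policy S A} {w : InfPath S A}
    (hw : ∀ i, (w i).1 = π (takeI w i)) (n : ℕ) : ConsistentFin π (takeI w n) := by
  induction n with
  | zero => intro i hi; simp at hi
  | succ n ih =>
    rw [consistentFin_iff_stepwise, takeI_succ, stepwise_append_singleton]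
    exact ⟨ih, hw n⟩

lemma takeI_mem_cyl {M : MDP S A AP} {π : Policy S A} {w : InfPath S A} (hw : w ∈ M.PathsSet π)
    (n : ℕ) : w ∈ M.Cyl π (takeI w n) :=
  ⟨hw, by simp⟩

/-- Two cylinders meet only if one of the two paths is a prefix of the other. -/
lemma MDP.pairwiseDisjoint_cyl (M : MDP S A AP) (π : Policy S A) {D : Set (FinPath S A)}
    (hD : IsAntichain (· <+: ·) D) : D.PairwiseDisjoint (M.Cyl π) := by
  intro p hp q hq hne
  rw [Function.onFun, Set.disjoint_left]
  rintro w ⟨-, hwp⟩ ⟨-, hwq⟩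
  rcases le_total p.length q.length with h | h
  · exact hD hp hq hne (hwp ▸ hwq ▸ takeI_prefix_takeI w h)
  · exact hD hq hp hne.symm (hwp ▸ hwq ▸ takeI_prefix_takeI w h)

lemma MDP.measurableSet_cyl (M : MDP S A AP) (π : Policy S A) {l : FinPath S A}
    (hv : M.ValidFin l) (hc : ConsistentFin π l) :
    @MeasurableSet _ (M.cylSigma π) (M.Cyl π l) :=
  MeasurableSpace.measurableSet_generateFrom ⟨l, hv, hc, rfl⟩

lemma measure_biUnion_cyl [Countable S] [Countable A] {M : MDP S A AP} {π : Policy S A}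
    {μ : @MeasureTheory.Measure (InfPath S A) (M.cylSigma π)} (hμ : IsCylMeasure M π μ)
    {D : Set (FinPath S A)} (hD : ∀ l ∈ D, M.ValidFin l ∧ ConsistentFin π l)
    (hanti : IsAntichain (· <+: ·) D) :
    μ (⋃ l ∈ D, M.Cyl π l) = ∑' l : D, M.pathWeight l := by
  rw [MeasureTheory.measure_biUnion D.to_countable (M.pairwiseDisjoint_cyl π hanti)
    fun l hl => M.measurableSet_cyl π (hD l hl).1 (hD l hl).2]
  exact tsum_congr fun l => hμ l (hD l l.2).1 (hD l l.2).2

lemma stateAtF_takeI (M : MDP S A AP) (w : InfPath S A) {i n : ℕ} (h : i ≤ n) :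
    M.stateAtF (takeI w n) i = M.stateAtI w i := by
  rw [MDP.stateAtF, take_takeI w h, lastState_takeI]

def MDP.traceF (M : MDP S A AP) (l : FinPath S A) : List (Set AP) :=
  (List.range (l.length + 1)).map fun i => M.label (M.stateAtF l i)

def MDP.FinSat (M : MDP S A AP) (φ : LTL AP) (l : FinPath S A) : Prop :=
  LTL.SatF (M.traceF l) φ

lemma traceF_takeI (M : MDP S A AP) (w : InfPath S A) (n : ℕ) :
    M.traceF (takeI w n) = (List.range (n + 1)).map fun i => M.label (M.stateAtI w i) := by
  refine List.ext_getElem (by simp [MDP.traceF]) fun i _ h => ?_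
  simp only [MDP.traceF, length_takeI, List.getElem_map, List.getElem_range]
  rw [stateAtF_takeI M w (by rw [List.length_map, List.length_range] at h; omega)]

lemma mem_satPhiSet_iff {M : MDP S A AP} {π : Policy S A} {φ : LTL AP} {w : InfPath S A} :
    w ∈ M.SatPhiSet π φ ↔ w ∈ M.PathsSet π ∧ ∃ n, M.FinSat φ (takeI w n) := by
  simp [MDP.SatPhiSet, MDP.FinSat, traceF_takeI]

lemma cyl_subset_satPhiSet {M : MDP S A AP} {π : Policy S A} {φ : LTL AP} {l : FinPath S A}
    (hl : M.FinSat φ l) : M.Cyl π l ⊆ M.SatPhiSet π φ := fun _ ⟨hw, hwl⟩ =>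
  mem_satPhiSet_iff.2 ⟨hw, l.length, by rwa [hwl]⟩

def MDP.firstSatPaths (M : MDP S A AP) (π : Policy S A) (φ : LTL AP) : Set (FinPath S A) :=
  {l | M.ValidFin l ∧ ConsistentFin π l ∧ M.FinSat φ l ∧
    ∀ l', l' <+: l → M.FinSat φ l' → l' = l}

lemma isAntichain_firstSatPaths (M : MDP S A AP) (π : Policy S A) (φ : LTL AP) :
    IsAntichain (· <+: ·) (M.firstSatPaths π φ) :=
  fun _ hp _ hq hne hpq => hne (hq.2.2.2 _ hpq hp.2.2.1)

lemma satPhiSet_eq_biUnion (M : MDP S A AP) (π : Policy S A) (φ : LTL AP) :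
    M.SatPhiSet π φ = ⋃ l ∈ M.firstSatPaths π φ, M.Cyl π l := by
  classical
  refine subset_antisymm (fun w hw => ?_)
    (Set.iUnion₂_subset fun l hl => cyl_subset_satPhiSet hl.2.2.1)
  obtain ⟨hw, hsat⟩ := mem_satPhiSet_iff.1 hw
  refine Set.mem_biUnion ⟨validFin_takeI M hw.1 _, consistentFin_takeI hw.2 _,
    Nat.find_spec hsat, fun l hl hsatl => ?_⟩ (takeI_mem_cyl hw (Nat.find hsat))
  have hlen : l.length ≤ Nat.find hsat := by simpa using hl.length_le
  rw [List.prefix_iff_eq_take, take_takeI w hlen] at hl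
  rw [hl] at hsatl ⊢
  rw [le_antisymm hlen (Nat.find_min' hsat hsatl)]

lemma measure_satPhiSet_eq_tsum [Countable S] [Countable A] {M : MDP S A AP} {π : Policy S A}
    {μ : @MeasureTheory.Measure (InfPath S A) (M.cylSigma π)} (hμ : IsCylMeasure M π μ)
    (φ : LTL AP) : μ (M.SatPhiSet π φ) = ∑' l : M.firstSatPaths π φ, M.pathWeight l := by
  rw [satPhiSet_eq_biUnion]
  exact measure_biUnion_cyl hμ (fun l hl => ⟨hl.1, hl.2.1⟩) (isAntichain_firstSatPaths M π φ)

section Augment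

variable (M : MDP S A AP)

@[simp] lemma augment_P_some (s : S) (a : A) (s' : S) :
    M.augment.P (some s) (some a) (some s') = M.P s a s' := rfl

@[simp] lemma augment_P_none_none (s : Option S) : M.augment.P s none none = 1 := by
  cases s <;> rfl

@[simp] lemma augment_enabled_some (s : S) :
    M.augment.enabled (some s) = insert none (Option.some '' M.enabled s) := rfl

@[simp] lemma augment_enabled_none : M.augment.enabled none = {none} := rfl

@[simp] lemma none_mem_augment_enabled (s : Option S) : none ∈ M.augment.enabled s := by
  cases s <;> simp

@[simp] lemma augment_label_some (s : S) :
    M.augment.label (some s) = insert none (Option.some '' M.label s) := rfl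

@[simp] lemma augment_label_none : M.augment.label none = ∅ := rfl

@[simp] lemma augment_init : M.augment.init = some M.init := rfl

lemma augment_P_ne_zero {x : Option S} {a : Option A} {y : Option S}
    (h : M.augment.P x a y ≠ 0) : a = none ↔ y = none := by
  cases x <;> cases a <;> cases y <;> simp_all [MDP.augment]

@[simp] lemma none_mem_augment_label_iff (s : Option S) :
    none ∈ M.augment.label s ↔ s ≠ none := by
  cases s <;> simp

end Augment

@[simp] lemma liftFin_nil : liftFin ([] : FinPath S A) = [] := rfl

@[simp] lemma liftFin_cons (x : A × S) (p : FinPath S A) :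
    liftFin (x :: p) = (some x.1, some x.2) :: liftFin p := rfl

@[simp] lemma liftFin_append (p q : FinPath S A) : liftFin (p ++ q) = liftFin p ++ liftFin q :=
  List.map_append ..

@[simp] lemma length_liftFin (p : FinPath S A) : (liftFin p).length = p.length :=
  List.length_map ..

lemma liftFin_take (p : FinPath S A) (i : ℕ) : (liftFin p).take i = liftFin (p.take i) :=
  (List.map_take ..).symm

lemma liftFin_injective : Function.Injective (liftFin : FinPath S A → _) :=
  List.map_injective_iff.2 fun x y h => by simpa [Prod.ext_iff] using h

lemma stepwise_liftFin {Q : FinPath (Option S) (Option A) → Option A × Option S → Prop}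
    {p : FinPath S A} :
    Stepwise Q (liftFin p) ↔ Stepwise (fun h x => Q (liftFin h) (some x.1, some x.2)) p :=
  stepwise_map _

lemma lastState_liftFin (M : MDP S A AP) (p : FinPath S A) :
    M.augment.lastState (liftFin p) = some (M.lastState p) := by
  induction p using List.reverseRecOn with
  | nil => rfl
  | append_singleton p x _ => simp

lemma validFin_liftFin_iff (M : MDP S A AP) {p : FinPath S A} :
    M.augment.ValidFin (liftFin p) ↔ M.ValidFin p := by
  simp [validFin_iff_stepwise, stepwise_liftFin, lastState_liftFin]

def termExt (p : FinPath S A) : FinPath (Option S) (Option A) :=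
  liftFin p ++ [(none, none)]

@[simp] lemma length_termExt (p : FinPath S A) : (termExt p).length = p.length + 1 := by
  simp [termExt]

lemma termExt_take (p : FinPath S A) {i : ℕ} (h : i ≤ p.length) :
    (termExt p).take i = liftFin (p.take i) := by
  rw [termExt, List.take_append_of_le_length (by simpa using h), liftFin_take]

lemma eq_of_termExt_prefix_termExt {p q : FinPath S A} (h : termExt p <+: termExt q) : p = q := by
  induction p generalizing q with
  | nil => cases q <;> simp_all [termExt]
  | cons x p ih =>
    cases q with
    | nil => simp [termExt] at h
    | cons y q =>
      simp only [termExt, liftFin_cons, List.cons_append, List.cons_prefix_cons] at h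
      rw [ih h.2, Prod.ext (Option.some_injective _ (congrArg Prod.fst h.1))
        (Option.some_injective _ (congrArg Prod.snd h.1))]

lemma validFin_termExt_iff (M : MDP S A AP) {p : FinPath S A} :
    M.augment.ValidFin (termExt p) ↔ M.ValidFin p := by
  rw [termExt, validFin_iff_stepwise, stepwise_append_singleton, ← validFin_iff_stepwise,
    validFin_liftFin_iff]
  simp [lastState_liftFin]

lemma consistentFin_termExt_iff {π' : Policy (Option S) (Option A)} {p : FinPath S A} :
    ConsistentFin π' (termExt p) ↔ ConsistentFin π' (liftFin p) ∧ π' (liftFin p) = none := by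
  rw [termExt, consistentFin_iff_stepwise, stepwise_append_singleton, eq_comm]
  rfl

lemma weightFrom_termExt (M : MDP S A AP) (s : S) (p : FinPath S A) :
    M.augment.weightFrom (some s) (termExt p) = M.weightFrom s p := by
  induction p generalizing s with
  | nil => simp [termExt, MDP.weightFrom]
  | cons x p ih => simp [termExt, MDP.weightFrom, ← ih]

lemma pathWeight_termExt (M : MDP S A AP) (p : FinPath S A) :
    M.augment.pathWeight (termExt p) = M.pathWeight p :=
  weightFrom_termExt M M.init p

section Translation

@[simp] lemma none_mem_liftTrace_iff (ρ : List (Set α)) (i : ℕ) :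
    none ∈ liftTrace ρ i ↔ i < ρ.length := by
  unfold liftTrace
  split_ifs with h
  · simpa
  · simpa using h

@[simp] lemma some_mem_liftTrace_iff (ρ : List (Set α)) (i : ℕ) (a : α) :
    some a ∈ liftTrace ρ i ↔ a ∈ ρ.getD i ∅ := by
  unfold liftTrace
  split_ifs with h
  · simp
  · rw [List.getD_eq_default _ _ (not_lt.1 h)]
    simp

lemma LTL.satI_liftTrace_trans (φ : LTL α) (ρ : List (Set α)) (i : ℕ) :
    LTL.SatI (liftTrace ρ) i φ.trans ↔ LTL.SatFI ρ i φ := by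
  induction φ generalizing i with
  | tru => simp [LTL.trans, LTL.SatI, LTL.SatFI]
  | atom a =>
    simp only [LTL.trans, LTL.SatI, LTL.SatFI, some_mem_liftTrace_iff, none_mem_liftTrace_iff,
      and_iff_left_iff_imp]
    intro ha
    by_contra hi
    rw [List.getD_eq_default _ _ (not_lt.1 hi)] at ha
    exact ha
  | neg φ ih => simp [LTL.trans, LTL.SatI, LTL.SatFI, ih]
  | conj φ ψ ihφ ihψ => simp [LTL.trans, LTL.SatI, LTL.SatFI, ihφ, ihψ]
  | next φ ih => simp [LTL.trans, LTL.SatI, LTL.SatFI, ih]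
  | untl φ ψ ihφ ihψ =>
    simp only [LTL.trans, LTL.SatI, LTL.SatFI, ihφ, ihψ, none_mem_liftTrace_iff]
    grind

lemma LTL.satI_G {σ : ℕ → Set α} {i : ℕ} {φ : LTL α} :
    LTL.SatI σ i φ.G ↔ ∀ j ≥ i, LTL.SatI σ j φ := by
  simp [LTL.G, LTL.SatI]

lemma LTL.sat_gtrans_iff {σ : ℕ → Set (Option α)} {φ : LTL α} :
    LTL.Sat σ φ.gtrans ↔
      LTL.SatI σ 0 φ.trans ∧
        ∃ j, (∀ k < j, none ∈ σ k) ∧ ∀ k ≥ j, none ∉ σ k := by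
  simp only [LTL.Sat, LTL.gtrans, LTL.SatI, LTL.satI_G, zero_le, true_and, forall_const]
  exact and_congr_right fun _ => exists_congr fun _ => and_comm

lemma LTL.sat_gtrans_liftTrace (φ : LTL α) (ρ : List (Set α)) :
    LTL.Sat (liftTrace ρ) φ.gtrans ↔ LTL.SatF ρ φ := by
  rw [LTL.sat_gtrans_iff, LTL.satI_liftTrace_trans]
  exact and_iff_left ⟨ρ.length, by simp, by simp⟩

end Translation

section AugmentPaths

variable {M : MDP S A AP} {w : InfPath (Option S) (Option A)}

lemma stateAtI_succ_eq_none_iff (hw : M.augment.ValidInf w) (i : ℕ) :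
    M.augment.stateAtI w (i + 1) = none ↔ (w i).1 = none :=
  (augment_P_ne_zero M (hw i).2.ne').symm

lemma stateAtI_eq_none_of_le (hw : M.augment.ValidInf w) {i j : ℕ}
    (hi : M.augment.stateAtI w i = none) (hij : i ≤ j) : M.augment.stateAtI w j = none := by
  induction j, hij using Nat.le_induction with
  | base => exact hi
  | succ j _ ih =>
    have hterm := (hw j).1
    rw [ih, augment_enabled_none, Set.mem_singleton_iff] at hterm
    exact (stateAtI_succ_eq_none_iff hw j).2 hterm

lemma exists_liftFin_eq_takeI (hw : M.augment.ValidInf w) {n : ℕ}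
    (halive : ∀ k ≤ n, M.augment.stateAtI w k ≠ none) :
    ∃ p : FinPath S A, liftFin p = takeI w n := by
  induction n with
  | zero => exact ⟨[], rfl⟩
  | succ n ih =>
    obtain ⟨p, hp⟩ := ih fun k hk => halive k (by omega)
    obtain ⟨s, hs⟩ := Option.ne_none_iff_exists'.1 (halive (n + 1) le_rfl)
    obtain ⟨a, ha⟩ := Option.ne_none_iff_exists'.1
      (mt (stateAtI_succ_eq_none_iff hw n).2 (halive (n + 1) le_rfl))
    have hwn : w n = (some a, some s) := Prod.ext ha hs
    exact ⟨p ++ [(a, s)], by rw [liftFin_append, hp, takeI_succ, hwn]; rfl⟩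

lemma exists_takeI_eq_termExt (hw : M.augment.ValidInf w) {n : ℕ}
    (halive : ∀ k ≤ n, M.augment.stateAtI w k ≠ none)
    (hdead : M.augment.stateAtI w (n + 1) = none) :
    ∃ p : FinPath S A, takeI w (p.length + 1) = termExt p := by
  obtain ⟨p, hp⟩ := exists_liftFin_eq_takeI hw halive
  have hn : w n = (none, none) := Prod.ext ((stateAtI_succ_eq_none_iff hw n).1 hdead) hdead
  refine ⟨p, ?_⟩
  rw [← length_liftFin, hp, length_takeI, takeI_succ, hn, termExt, hp]

lemma trace_eq_liftTrace_traceF (hw : M.augment.ValidInf w) {p : FinPath S A}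
    (hp : takeI w (p.length + 1) = termExt p) :
    (fun i => M.augment.label (M.augment.stateAtI w i)) = liftTrace (M.traceF p) := by
  funext i
  by_cases hi : i ≤ p.length
  · have hstate : M.augment.stateAtI w i = some (M.stateAtF p i) := by
      rw [← lastState_takeI, ← take_takeI w (Nat.le_succ_of_le hi), hp, termExt_take p hi,
        lastState_liftFin]
      rfl
    simp [hstate, liftTrace, MDP.traceF, hi]
  · have hdead : M.augment.stateAtI w (p.length + 1) = none := by
      rw [← lastState_takeI, hp, termExt, lastState_append_singleton]
    rw [stateAtI_eq_none_of_le hw hdead (by omega), augment_label_none, liftTrace,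
      if_neg (by rw [MDP.traceF, List.length_map, List.length_range]; omega)]

end AugmentPaths

def MDP.termSatPaths (M : MDP S A AP) (π' : Policy (Option S) (Option A)) (φ : LTL AP) :
    Set (FinPath S A) :=
  {p | M.ValidFin p ∧ ConsistentFin π' (termExt p) ∧ M.FinSat φ p}

lemma cyl_termExt_subset_satLTLSet {M : MDP S A AP} {π' : Policy (Option S) (Option A)}
    {φ : LTL AP} {p : FinPath S A} (hp : M.FinSat φ p) :
    M.augment.Cyl π' (termExt p) ⊆ M.augment.SatLTLSet π' φ.gtrans := by
  rintro w ⟨hw, hwp⟩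
  rw [length_termExt] at hwp
  refine ⟨hw, ?_⟩
  rw [trace_eq_liftTrace_traceF hw.1 hwp, LTL.sat_gtrans_liftTrace]
  exact hp

lemma satLTLSet_eq_biUnion (M : MDP S A AP) (π' : Policy (Option S) (Option A)) (φ : LTL AP) :
    M.augment.SatLTLSet π' φ.gtrans =
      ⋃ l ∈ termExt '' M.termSatPaths π' φ, M.augment.Cyl π' l := by
  rw [Set.biUnion_image]
  refine subset_antisymm (fun w ⟨hw, hsat⟩ => ?_)
    (Set.iUnion₂_subset fun p hp => cyl_termExt_subset_satLTLSet hp.2.2)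
  obtain ⟨-, j, halive, hdead⟩ := LTL.sat_gtrans_iff.1 hsat
  simp only [none_mem_augment_label_iff, ne_eq, not_not] at halive hdead
  obtain ⟨n, rfl⟩ : ∃ n, j = n + 1 :=
    Nat.exists_eq_add_one.2 (Nat.pos_of_ne_zero fun h0 => by simpa [h0, MDP.stateAtI] using hdead 0)
  obtain ⟨p, hp⟩ :=
    exists_takeI_eq_termExt hw.1 (fun k hk => halive k (by omega)) (hdead _ le_rfl)
  have hsatp : M.FinSat φ p := by
    rw [MDP.FinSat, ← LTL.sat_gtrans_liftTrace, ← trace_eq_liftTrace_traceF hw.1 hp]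
    exact hsat
  refine Set.mem_biUnion ⟨?_, ?_, hsatp⟩ ⟨hw, by rwa [length_termExt]⟩
  · rw [← validFin_termExt_iff, ← hp]
    exact validFin_takeI _ hw.1 _
  · rw [← hp]
    exact consistentFin_takeI hw.2 _

lemma isAntichain_image_termExt (D : Set (FinPath S A)) :
    IsAntichain (· <+: ·) (termExt '' D) := by
  rintro _ ⟨p, -, rfl⟩ _ ⟨q, -, rfl⟩ hne h
  exact hne (congrArg termExt (eq_of_termExt_prefix_termExt h))

lemma measure_satLTLSet_eq_tsum [Countable S] [Countable A] {M : MDP S A AP}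
    {π' : Policy (Option S) (Option A)}
    {μ : @MeasureTheory.Measure (InfPath (Option S) (Option A)) (M.augment.cylSigma π')}
    (hμ : IsCylMeasure M.augment π' μ) (φ : LTL AP) :
    μ (M.augment.SatLTLSet π' φ.gtrans) = ∑' p : M.termSatPaths π' φ, M.pathWeight p := by
  rw [satLTLSet_eq_biUnion, measure_biUnion_cyl hμ ?_ (isAntichain_image_termExt _),
    tsum_image _ fun p _ q _ h => eq_of_termExt_prefix_termExt (h ▸ List.prefix_refl _)]
  · simp only [pathWeight_termExt]
  · rintro _ ⟨p, hp, rfl⟩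
    exact ⟨(validFin_termExt_iff M).2 hp.1, hp.2.1⟩

section Policies

variable (M : MDP S A AP)

open Classical in
/-- The policy of `M'` that follows `π` until the path satisfies `φ`, and then terminates. -/
noncomputable def MDP.terminateOnSat (π : Policy S A) (φ : LTL AP) :
    Policy (Option S) (Option A) :=
  Function.extend liftFin
    (fun p => if ∃ q, q <+: p ∧ M.FinSat φ q then none else some (π p)) fun _ => none

open Classical in
lemma terminateOnSat_liftFin (π : Policy S A) (φ : LTL AP) (p : FinPath S A) :
    M.terminateOnSat π φ (liftFin p) =
      if ∃ q, q <+: p ∧ M.FinSat φ q then none else some (π p) :=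
  liftFin_injective.extend_apply _ _ _

lemma isPolicy_terminateOnSat {π : Policy S A} (hπ : M.IsPolicy π) (φ : LTL AP) :
    M.augment.IsPolicy (M.terminateOnSat π φ) := by
  intro l
  by_cases hl : ∃ p, liftFin p = l
  · obtain ⟨p, rfl⟩ := hl
    rw [terminateOnSat_liftFin, lastState_liftFin]
    split_ifs
    · exact none_mem_augment_enabled M _
    · simpa using hπ p
  · rw [MDP.terminateOnSat, Function.extend_apply' _ _ _ hl]
    exact none_mem_augment_enabled M _

lemma firstSatPaths_subset_termSatPaths (π : Policy S A) (φ : LTL AP) :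
    M.firstSatPaths π φ ⊆ M.termSatPaths (M.terminateOnSat π φ) φ := by
  rintro p ⟨hval, hcons, hsat, hmin⟩
  refine ⟨hval, consistentFin_termExt_iff.2 ⟨?_, ?_⟩, hsat⟩
  · rw [consistentFin_iff_stepwise, stepwise_liftFin]
    refine ((consistentFin_iff_stepwise π p).1 hcons).imp fun h x hpre hx => ?_
    rw [terminateOnSat_liftFin, if_neg, hx]
    rintro ⟨q, hqh, hq⟩
    obtain rfl := hmin q (hqh.trans ((List.prefix_append h [x]).trans hpre)) hq
    have hlen := hpre.length_le
    rw [List.length_append, List.length_singleton] at hlen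
    exact absurd hqh.length_le (by omega)
  · rw [terminateOnSat_liftFin, if_pos ⟨p, List.prefix_refl p, hsat⟩]

noncomputable def MDP.unliftPolicy (h : ∀ s, (M.enabled s).Nonempty)
    (π' : Policy (Option S) (Option A)) : Policy S A :=
  fun l => (π' (liftFin l)).getD (h (M.lastState l)).some

variable (h : ∀ s, (M.enabled s).Nonempty) {π' : Policy (Option S) (Option A)}

lemma isPolicy_unliftPolicy (hπ' : M.augment.IsPolicy π') :
    M.IsPolicy (M.unliftPolicy h π') := by
  intro l
  have hl := hπ' (liftFin l)
  rw [lastState_liftFin, augment_enabled_some] at hl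
  cases ha : π' (liftFin l) with
  | none => simpa [MDP.unliftPolicy, ha] using (h _).some_mem
  | some a => simpa [MDP.unliftPolicy, ha] using hl

lemma consistentFin_unliftPolicy {p : FinPath S A} (hp : ConsistentFin π' (liftFin p)) :
    ConsistentFin (M.unliftPolicy h π') p := by
  rw [consistentFin_iff_stepwise, stepwise_liftFin] at hp
  rw [consistentFin_iff_stepwise]
  refine hp.imp fun l x _ hx => ?_
  change x.1 = (π' (liftFin l)).getD _
  rw [← hx]
  rfl

/-- Paths of `termSatPaths` are where `π'` terminates, so none extends another. -/
lemma isAntichain_termSatPaths (π' : Policy (Option S) (Option A)) (φ : LTL AP) :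
    IsAntichain (· <+: ·) (M.termSatPaths π' φ) := by
  rintro p hp _ hq hne ⟨_ | ⟨x, t⟩, rfl⟩
  · exact hne (List.append_nil p).symm
  have hterm := (consistentFin_termExt_iff.1 hp.2.1).2
  have hstep := (consistentFin_termExt_iff.1 hq.2.1).1
  rw [consistentFin_iff_stepwise] at hstep
  have hnext := hstep.of_prefix (l₁ := liftFin (p ++ [x])) (by simp)
  rw [liftFin_append, liftFin_cons, liftFin_nil, stepwise_append_singleton] at hnext
  exact Option.some_ne_none _ (hnext.2.trans hterm)

lemma tsum_termSatPaths_le_measure [Countable S] [Countable A]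
    {μ : @MeasureTheory.Measure (InfPath S A) (M.cylSigma (M.unliftPolicy h π'))}
    (hμ : IsCylMeasure M (M.unliftPolicy h π') μ) (φ : LTL AP) :
    ∑' p : M.termSatPaths π' φ, M.pathWeight p ≤
      μ (M.SatPhiSet (M.unliftPolicy h π') φ) := by
  rw [← measure_biUnion_cyl hμ (fun p hp => ⟨hp.1, consistentFin_unliftPolicy M h
    (consistentFin_termExt_iff.1 hp.2.1).1⟩) (isAntichain_termSatPaths M π' φ)]
  exact MeasureTheory.measure_mono (Set.iUnion₂_subset fun p hp => cyl_subset_satPhiSet hp.2.2)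

end Policies

theorem max_prob_ltlf_eq_max_prob_ltl_augment_general
    {S A AP : Type} [Fintype S] [Fintype A]
    (M : MDP S A AP) (hM : M.IsWF) (φ : LTL AP)
    (μf : ∀ π : Policy S A,
      @MeasureTheory.Measure (InfPath S A) (M.cylSigma π))
    (hμf : ∀ π : Policy S A, M.IsPolicy π → IsCylMeasure M π (μf π))
    (μf' : ∀ π' : Policy (Option S) (Option A),
      @MeasureTheory.Measure (InfPath (Option S) (Option A))
        ((M.augment).cylSigma π'))
    (hμf' : ∀ π' : Policy (Option S) (Option A),
      (M.augment).IsPolicy π' → IsCylMeasure (M.augment) π' (μf' π')) :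
    (⨆ (π : Policy S A) (_ : M.IsPolicy π), μf π (M.SatPhiSet π φ)) =
      ⨆ (π' : Policy (Option S) (Option A)) (_ : (M.augment).IsPolicy π'),
        μf' π' ((M.augment).SatLTLSet π' (LTL.gtrans φ)) := by
  apply le_antisymm
  · refine iSup₂_le fun π hπ => ?_
    have hπ' := isPolicy_terminateOnSat M hπ φ
    calc μf π (M.SatPhiSet π φ)
        = ∑' p : M.firstSatPaths π φ, M.pathWeight p :=
          measure_satPhiSet_eq_tsum (hμf π hπ) φ
      _ ≤ ∑' p : M.termSatPaths (M.terminateOnSat π φ) φ, M.pathWeight p :=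
        ENNReal.tsum_mono_subtype _ (firstSatPaths_subset_termSatPaths M π φ)
      _ = μf' _ (M.augment.SatLTLSet (M.terminateOnSat π φ) φ.gtrans) :=
        (measure_satLTLSet_eq_tsum (hμf' _ hπ') φ).symm
      _ ≤ _ := le_iSup₂_of_le _ hπ' le_rfl
  · refine iSup₂_le fun π' hπ' => ?_
    have hπ := isPolicy_unliftPolicy M hM.1 hπ'
    calc μf' π' (M.augment.SatLTLSet π' φ.gtrans)
        = ∑' p : M.termSatPaths π' φ, M.pathWeight p :=
          measure_satLTLSet_eq_tsum (hμf' π' hπ') φ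
      _ ≤ μf _ (M.SatPhiSet (M.unliftPolicy hM.1 π') φ) :=
        tsum_termSatPaths_le_measure M hM.1 (hμf _ hπ) φ
      _ ≤ _ := le_iSup₂_of_le _ hπ le_rfl

/-- Theorem 1: `max_{π ∈ Π} Pr(M^π ⊨ φ) =
max_{π' ∈ Π'} Pr(M'^{π'} ⊨ g(φ))`, where `Π` is the set of all policies of `M`
and `Π'` is the set of all policies of the augmented MDP `M'`. -/
theorem max_prob_ltlf_eq_max_prob_ltl_augment
    {S A AP : Type} [Fintype S] [Fintype A] [Fintype AP]
    (M : MDP S A AP) (hM : M.IsWF) (φ : LTL AP)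
    (μf : ∀ π : Policy S A,
      @MeasureTheory.Measure (InfPath S A) (M.cylSigma π))
    (hμf : ∀ π : Policy S A, M.IsPolicy π → IsCylMeasure M π (μf π))
    (μf' : ∀ π' : Policy (Option S) (Option A),
      @MeasureTheory.Measure (InfPath (Option S) (Option A))
        ((M.augment).cylSigma π'))
    (hμf' : ∀ π' : Policy (Option S) (Option A),
      (M.augment).IsPolicy π' → IsCylMeasure (M.augment) π' (μf' π')) :
    (⨆ (π : Policy S A) (_ : M.IsPolicy π), μf π (M.SatPhiSet π φ)) =
      ⨆ (π' : Policy (Option S) (Option A)) (_ : (M.augment).IsPolicy π'),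
        μf' π' ((M.augment).SatLTLSet π' (LTL.gtrans φ)) :=
  max_prob_ltlf_eq_max_prob_ltl_augment_general M hM φ μf hμf μf' hμf'

end LTLfMDP
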